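/- For the four-state example problem P and policy π, the policy π does not solve the FOND+ problem ⟨P, C6⟩ with C6 = {({a}, ∅), ({b}, {a})}: the infinite trajectory s0, s1, s0, s2, s0, s1, s0, s2, … is a maximal π-trajectory that is fair for ⟨P, C6⟩ but never reaches the goal state g. -/

import Mathlib

namespace FondPaper

/-- A FOND model: initial state, goal states, and transition function
`F a s` giving the set of possible successor states of action `a` in state `s`. -/
structure FOND (S A : Type) where
  init : S
  goal : Set S
  F : A → S → Set S

variable {S A V : Type}

/-- Action `a` is applicable in `s` iff it has some successor. -/
def FOND.Applicable (P : FOND S A) (a : A) (s : S) : Prop := (P.F a s).Nonempty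

/-- A policy is a partial function mapping non-goal states into actions. -/
def IsPolicy (P : FOND S A) (π : S → Option A) : Prop := ∀ s ∈ P.goal, π s = none

/-- A (finite or infinite) trajectory: `len = some n` means the trajectory is
`states 0, …, states n`; `len = none` means it is infinite. -/
structure Traj (S : Type) where
  states : ℕ → S
  len : Option ℕ

/-- Index `i` is within the trajectory. -/
def Traj.Inside (τ : Traj S) (i : ℕ) : Prop := ∀ n, τ.len = some n → i ≤ n

/-- There is a step from index `i` to `i+1` in the trajectory. -/
def Traj.HasStep (τ : Traj S) (i : ℕ) : Prop := ∀ n, τ.len = some n → i < n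

/-- `τ` is a π-trajectory of `P`. -/
def IsTraj (P : FOND S A) (π : S → Option A) (τ : Traj S) : Prop :=
  τ.states 0 = P.init ∧
  ∀ i, τ.HasStep i → ∃ a, π (τ.states i) = some a ∧ τ.states (i + 1) ∈ P.F a (τ.states i)

/-- Maximal trajectory: infinite, or finite ending in the first goal state,
or in a state where the policy is undefined or prescribes an inapplicable action. -/
def MaximalTraj (P : FOND S A) (π : S → Option A) (τ : Traj S) : Prop :=
  τ.len = none ∨
  ∃ n, τ.len = some n ∧
    ((τ.states n ∈ P.goal ∧ ∀ i < n, τ.states i ∉ P.goal) ∨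
     π (τ.states n) = none ∨
     (∃ a, π (τ.states n) = some a ∧ ¬ P.Applicable a (τ.states n)))

/-- The trajectory reaches a goal state. -/
def ReachesGoal (P : FOND S A) (τ : Traj S) : Prop :=
  ∃ i, τ.Inside i ∧ τ.states i ∈ P.goal

/-- `s` is recurrent in `τ`: the trajectory is infinite and `s` occurs infinitely often. -/
def RecurrentIn (τ : Traj S) (s : S) : Prop :=
  τ.len = none ∧ {i | τ.states i = s}.Infinite

/-- One policy step: `s'` is a possible successor of `s` under the policy. -/
def PStep (P : FOND S A) (π : S → Option A) (s s' : S) : Prop :=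
  ∃ a, π s = some a ∧ s' ∈ P.F a s

/-- The policy reaches `s'` from `s`. -/
def ReachesFrom (P : FOND S A) (π : S → Option A) : S → S → Prop :=
  Relation.ReflTransGen (PStep P π)

/-- `s` is reached by the policy: some finite π-trajectory ends at `s`. -/
def ReachedBy (P : FOND S A) (π : S → Option A) (s : S) : Prop :=
  ∃ τ : Traj S, IsTraj P π τ ∧ ∃ n, τ.len = some n ∧ τ.states n = s

/-- Strong-cyclic solution: a goal is reachable via π from every state reached by π. -/
def StrongCyclic (P : FOND S A) (π : S → Option A) : Prop :=
  ∀ s, ReachedBy P π s → ∃ g ∈ P.goal, ReachesFrom P π s g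

/-- Strong solution: every maximal π-trajectory reaches a goal state. -/
def Strong (P : FOND S A) (π : S → Option A) : Prop :=
  ∀ τ : Traj S, IsTraj P π τ → MaximalTraj P π τ → ReachesGoal P τ

/-- Fairness when all actions are fair: each recurrent state is immediately
followed by each of its possible successors infinitely often.
(Finite trajectories have no recurrent states, hence are fair.) -/
def FairAll (P : FOND S A) (π : S → Option A) (τ : Traj S) : Prop :=
  ∀ s, RecurrentIn τ s → ∀ a, π s = some a → ∀ s' ∈ P.F a s,
    {i | τ.states i = s ∧ τ.states (i + 1) = s'}.Infinite

/-- The policy is acyclic: no π-trajectory visits the same state more than once. -/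
def AcyclicPolicy (P : FOND S A) (π : S → Option A) : Prop :=
  ∀ τ : Traj S, IsTraj P π τ → ∀ i j, τ.Inside i → τ.Inside j →
    τ.states i = τ.states j → i = j

/-- The non-deterministic actions of `P`: those with at least two possible
successors in some state. -/
def NonDetActs (P : FOND S A) : Set A :=
  {a | ∃ s s₁ s₂, s₁ ∈ P.F a s ∧ s₂ ∈ P.F a s ∧ s₁ ≠ s₂}

/-- The occurrence of the action `π s` at recurrent state `s` of trajectory `τ`
is fair: for some constraint `(A, B) ∈ C`, `π s ∈ A` and actions from `B`
occur only finitely often along `τ`. -/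
def FairOcc (C : Set (Set A × Set A)) (π : S → Option A) (τ : Traj S) (s : S) : Prop :=
  ∃ c ∈ C, (∃ a, π s = some a ∧ a ∈ c.1) ∧
    ∀ b ∈ c.2, {i | π (τ.states i) = some b}.Finite

/-- `τ` is fair for the FOND+ problem `⟨P, C⟩`. -/
def FairPlus (P : FOND S A) (C : Set (Set A × Set A)) (π : S → Option A) (τ : Traj S) : Prop :=
  ∀ s, RecurrentIn τ s → FairOcc C π τ s → ∀ a, π s = some a → ∀ s' ∈ P.F a s,
    {i | τ.states i = s ∧ τ.states (i + 1) = s'}.Infinite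

/-- `π` solves the FOND+ problem `⟨P, C⟩`. -/
def SolvesPlus (P : FOND S A) (C : Set (Set A × Set A)) (π : S → Option A) : Prop :=
  ∀ τ : Traj S, IsTraj P π τ → MaximalTraj P π τ → FairPlus P C π τ → ReachesGoal P τ

/-- Well-formed set of fairness constraints: finite, each `A`-part a set of
non-deterministic actions and each `B`-part disjoint from the `A`-part. -/
def WellFormedC (P : FOND S A) (C : Set (Set A × Set A)) : Prop :=
  C.Finite ∧ ∀ c ∈ C, c.1 ⊆ NonDetActs P ∧ Disjoint c.1 c.2

/-- A cycle on `s` w.r.t. policy `π`: a sequence `s = t 0, …, t k = s` with `k ≥ 1`,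
each `t i` (`i < k`) non-goal with `π` defined and `t (i+1)` a possible successor. -/
def CycleOn (P : FOND S A) (π : S → Option A) (s : S) (t : ℕ → S) (k : ℕ) : Prop :=
  1 ≤ k ∧ t 0 = s ∧ t k = s ∧
    ∀ i < k, t i ∉ P.goal ∧ ∃ a, π (t i) = some a ∧ t (i + 1) ∈ P.F a (t i)

/-- `s` is fair-for-`T`: for some `(A, B) ∈ C`, `π s ∈ A` and every cycle on `s`
containing a state where `π` prescribes a `B`-action also contains a state in `T`. -/
def FairFor (P : FOND S A) (C : Set (Set A × Set A)) (π : S → Option A)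
    (T : Set S) (s : S) : Prop :=
  ∃ c ∈ C, (∃ a, π s = some a ∧ a ∈ c.1) ∧
    ∀ t k, CycleOn P π s t k →
      (∃ i ≤ k, ∃ b, π (t i) = some b ∧ b ∈ c.2) → ∃ j ≤ k, t j ∈ T

/-- `T` is closed under the FOND+ termination rules. -/
def TermClosed (P : FOND S A) (C : Set (Set A × Set A)) (π : S → Option A) (T : Set S) : Prop :=
  P.goal ⊆ T ∧
  (∀ s a, π s = some a → FairFor P C π T s → (∃ s' ∈ P.F a s, s' ∈ T) → s ∈ T) ∧
  (∀ s a, π s = some a → ¬ FairFor P C π T s → (P.F a s).Nonempty →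
    (∀ s' ∈ P.F a s, s' ∈ T) → s ∈ T)

/-- `s` is terminating for `π` in `⟨P, C⟩`: it belongs to the least set closed
under the FOND+ termination rules. -/
def Terminating (P : FOND S A) (C : Set (Set A × Set A)) (π : S → Option A) (s : S) : Prop :=
  ∀ T : Set S, TermClosed P C π T → s ∈ T

/-- The operator `Φ` of the FOND+ termination computation. -/
def Phi (P : FOND S A) (C : Set (Set A × Set A)) (π : S → Option A) (T : Set S) : Set S :=
  P.goal ∪
  {s | ∃ a, π s = some a ∧ FairFor P C π T s ∧ ∃ s' ∈ P.F a s, s' ∈ T} ∪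
  {s | ∃ a, π s = some a ∧ (P.F a s).Nonempty ∧ P.F a s ⊆ T}

/-- The policy graph of `P` and `π`: edges `(s, s')` for non-goal reachable `s`
with `π s` defined and `s'` a possible successor. -/
def PolicyEdges (P : FOND S A) (π : S → Option A) : Set (S × S) :=
  {e | ReachesFrom P π P.init e.1 ∧ e.1 ∉ P.goal ∧ PStep P π e.1 e.2}

/-- Path (of length ≥ 0) in a graph given by its edge set. -/
def GPath (G : Set (S × S)) : S → S → Prop :=
  Relation.ReflTransGen (fun x y => (x, y) ∈ G)

/-- Edge `e = (s, s')` of `G` is removable by Sieve: `π s` decrements some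
variable `x` not incremented at any state lying on a path in `G` from `s'` back to `s`. -/
def Removable (π : S → Option A) (decs incs : A → Set V) (G : Set (S × S)) (e : S × S) : Prop :=
  e ∈ G ∧ ∃ x : V, (∃ a, π e.1 = some a ∧ x ∈ decs a) ∧
    ∀ w, GPath G e.2 w → GPath G w e.1 → ∀ a, π w = some a → x ∉ incs a

/-- One Sieve edge-removal step. -/
def SieveStep (π : S → Option A) (decs incs : A → Set V) (G G' : Set (S × S)) : Prop :=
  ∃ e, Removable π decs incs G e ∧ G' = G \ {e}

/-- Graph acyclicity: no nonempty path from a state back to itself. -/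
def GAcyclic (G : Set (S × S)) : Prop :=
  ∀ s s', (s, s') ∈ G → ¬ GPath G s' s

/-- A cycle on `s` in a graph given by its edge set. -/
def ECycleOn (E : Set (S × S)) (s : S) (t : ℕ → S) (k : ℕ) : Prop :=
  1 ≤ k ∧ t 0 = s ∧ t k = s ∧ ∀ i < k, (t i, t (i + 1)) ∈ E

/-- `T` is closed under the QNP termination rules. -/
def QNPClosed (P : FOND S A) (π : S → Option A) (decs incs : A → Set V) (T : Set S) : Prop :=
  ∀ s, ReachesFrom P π P.init s →
    ((¬ ∃ t k, ECycleOn (PolicyEdges P π) s t k) ∨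
     (∀ t k, ECycleOn (PolicyEdges P π) s t k → ∃ j ≤ k, t j ∈ T) ∨
     (∃ x, (∃ a, π s = some a ∧ x ∈ decs a) ∧
        ∀ t k, ECycleOn (PolicyEdges P π) s t k →
          (∃ i ≤ k, ∃ a, π (t i) = some a ∧ x ∈ incs a) → ∃ j ≤ k, t j ∈ T)) →
    s ∈ T

/-- `s` is QNP-terminating: it belongs to the least set closed under the QNP
termination rules. -/
def QNPTerm (P : FOND S A) (π : S → Option A) (decs incs : A → Set V) (s : S) : Prop :=
  ∀ T : Set S, QNPClosed P π decs incs T → s ∈ T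

/-- `T` is closed under the Dual-FOND termination rules. -/
def DualClosed (P : FOND S A) (fair : A → Prop) (π : S → Option A) (T : Set S) : Prop :=
  P.goal ⊆ T ∧
  (∀ s a, π s = some a → fair a → (∃ s' ∈ P.F a s, s' ∈ T) → s ∈ T) ∧
  (∀ s a, π s = some a → ¬ fair a → (P.F a s).Nonempty →
    (∀ s' ∈ P.F a s, s' ∈ T) → s ∈ T)

/-- `s` is Dual-FOND terminating. -/
def DualTerm (P : FOND S A) (fair : A → Prop) (π : S → Option A) (s : S) : Prop :=
  ∀ T : Set S, DualClosed P fair π T → s ∈ T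

/-- `π` solves the Dual FOND problem `(P, fair)`. -/
def SolvesDual [Fintype S] (P : FOND S A) (fair : A → Prop) (π : S → Option A) : Prop :=
  (∀ s, ReachedBy P π s → s ∉ P.goal → ∃ a, π s = some a ∧ (P.F a s).Nonempty) ∧
  ∃ d : S → ℕ,
    (∀ s, ReachedBy P π s → d s ≤ Fintype.card S) ∧
    (∀ s, ReachedBy P π s → s ∈ P.goal → d s = 0) ∧
    (∀ s a, ReachedBy P π s → π s = some a →
      (fair a → ∃ s' ∈ P.F a s, d s' < d s) ∧
      (¬ fair a → ∀ s' ∈ P.F a s, d s' < d s))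

end FondPaper

open FondPaper

namespace FondExample
open FondPaper

/-- States of the four-state example. -/
inductive ExS where
  | s0 | s1 | s2 | g
deriving DecidableEq

/-- Actions of the four-state example. -/
inductive ExA where
  | a | b
deriving DecidableEq

/-- Transitions: `F a s0 = {s1, s2}`, `F b s1 = F b s2 = {s0, g}`, else `∅`. -/
def exF : ExA → ExS → Set ExS
  | ExA.a, ExS.s0 => {ExS.s1, ExS.s2}
  | ExA.b, ExS.s1 => {ExS.s0, ExS.g}
  | ExA.b, ExS.s2 => {ExS.s0, ExS.g}
  | _, _ => ∅

/-- The example FOND problem. -/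
def exP : FOND ExS ExA := ⟨ExS.s0, {ExS.g}, exF⟩

/-- The example policy: `π s0 = a`, `π s1 = π s2 = b`, undefined on `g`. -/
def exPi : ExS → Option ExA
  | ExS.s0 => some ExA.a
  | ExS.s1 => some ExA.b
  | ExS.s2 => some ExA.b
  | ExS.g => none

/-- The infinite trajectory `s0, s1, s0, s2, s0, s1, s0, s2, …`. -/
def exTau : Traj ExS :=
  ⟨fun i => match i % 4 with
    | 0 => ExS.s0
    | 1 => ExS.s1
    | 2 => ExS.s0
    | _ => ExS.s2, none⟩

end FondExample

open FondExample

/-- The constraint set C6 = {({a}, ∅), ({b}, {a})}. -/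
def C6 : Set (Set ExA × Set ExA) := {({ExA.a}, (∅ : Set ExA)), ({ExA.b}, {ExA.a})}

/-!
Along `s0, s1, s0, s2, …` the action `a` is taken infinitely often, so the constraint
`({b}, {a})` never makes the occurrence of `b` at `s1` or `s2` fair, and the constraint
`({a}, ∅)` only asks that both outcomes `s1`, `s2` of `a` at `s0` recur, which they do.
The goal outcome of `b` is therefore never required.
-/

theorem Set.infinite_setOf_of_forall_mul_add {p : ℕ → Prop} {k : ℕ} (hk : 0 < k) (r : ℕ)
    (h : ∀ n, p (k * n + r)) : {i | p i}.Infinite :=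
  Set.infinite_of_injective_forall_mem (fun _ _ hmn => by simpa [hk.ne'] using hmn) h

namespace FondPaper

variable {S A : Type} {P : FOND S A} {π : S → Option A} {τ : Traj S}

theorem not_reachesGoal_of_len_eq_none (hπ : IsPolicy P π) (hτ : IsTraj P π τ)
    (hlen : τ.len = none) : ¬ ReachesGoal P τ := by
  rintro ⟨i, -, hgoal⟩
  obtain ⟨a, ha, -⟩ := hτ.2 i (by simp [Traj.HasStep, hlen])
  simp [hπ _ hgoal] at ha

end FondPaper

namespace FondExample

theorem isPolicy_exPi : IsPolicy exP exPi := by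
  rintro s rfl
  rfl

theorem pStep_exTau (i : ℕ) : PStep exP exPi (exTau.states i) (exTau.states (i + 1)) := by
  have : i % 4 < 4 := Nat.mod_lt _ (by norm_num)
  interval_cases h : i % 4 <;> simp [exTau, Nat.add_mod, h, PStep, exP, exF, exPi]

theorem isTraj_exTau : IsTraj exP exPi exTau :=
  ⟨rfl, fun i _ => pStep_exTau i⟩

theorem infinite_exPi_exTau_eq_a : {i | exPi (exTau.states i) = some ExA.a}.Infinite :=
  Set.infinite_setOf_of_forall_mul_add (k := 4) (by norm_num) 0 fun n => by
    simp [exTau, exPi]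

theorem finite_of_fairOcc_C6 {S : Type} {π : S → Option ExA} {τ : Traj S} {s : S}
    (hocc : FairOcc C6 π τ s) (hb : π s = some ExA.b) :
    {i | π (τ.states i) = some ExA.a}.Finite := by
  obtain ⟨c, hc, ⟨x, hx, hxc⟩, hB⟩ := hocc
  rcases hc with rfl | rfl
  · simp_all
  · exact hB ExA.a rfl

theorem fairPlus_C6_exTau : FairPlus exP C6 exPi exTau := by
  rintro s - hocc x hx s' hs'
  cases s with
  | s0 =>
    obtain rfl : x = ExA.a := by simpa [exPi] using hx.symm
    rcases hs' with rfl | rfl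
    · exact Set.infinite_setOf_of_forall_mul_add (k := 4) (by norm_num) 0 fun n => by
        simp [exTau, Nat.add_mod]
    · exact Set.infinite_setOf_of_forall_mul_add (k := 4) (by norm_num) 2 fun n => by
        simp [exTau, Nat.add_mod]
  | s1 | s2 => exact absurd (finite_of_fairOcc_C6 hocc rfl) infinite_exPi_exTau_eq_a
  | g => cases hx

end FondExample

/-- π does not solve ⟨P, C6⟩: the infinite trajectory
s0, s1, s0, s2, s0, s1, s0, s2, … is a maximal π-trajectory that is fair for
⟨P, C6⟩ but never reaches the goal g. -/
theorem stmt13 :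
    IsTraj exP exPi exTau ∧ MaximalTraj exP exPi exTau ∧
    FairPlus exP C6 exPi exTau ∧ ¬ ReachesGoal exP exTau ∧
    ¬ SolvesPlus exP C6 exPi := by
  have hmax : MaximalTraj exP exPi exTau := Or.inl rfl
  have hng : ¬ ReachesGoal exP exTau :=
    not_reachesGoal_of_len_eq_none isPolicy_exPi isTraj_exTau rfl
  exact ⟨isTraj_exTau, hmax, fairPlus_C6_exTau, hng,
    fun h => hng (h exTau isTraj_exTau hmax fairPlus_C6_exTau)⟩
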